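/- The Uniform-of-Plurality mechanism, which selects as the representative of each district d an alternative ranked first by at least as many agents of d as any other alternative, and then selects the winner uniformly at random from the k district representatives, has distortion at most k·m²: on every unit-sum instance with k (possibly asymmetric) districts and rankings consistent with the valuations, E[SW(w)] ≥ (1/(k·m²))·max_{a∈A} SW(a). -/

import Mathlib

/-!
A plurality winner of a district is ranked first by at least a `1/m` fraction of the district's
agents, and each of them, ranking it first, values it at least `1/m`. So the representative of a
district with `n_d` agents has welfare at least `n_d / m²` within the district, whereas no
alternative has welfare more than `n_d` there. Summing over districts,
`SW(a) ≤ ∑_d n_d ≤ m² ∑_d SW(rep d) = k m² E[SW(w)]`.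
-/

open Finset Fintype

theorem card_le_card_mul_card_fiber_of_forall_le {ι β : Type*} [Fintype ι] [Fintype β]
    [DecidableEq β] (f : ι → β) (c : β) (hc : ∀ b, #{i | f i = b} ≤ #{i | f i = c}) :
    card ι ≤ card β * #{i | f i = c} := by
  calc card ι = ∑ b, #{i | f i = b} := by
        simpa using card_eq_sum_card_fiberwise (s := univ) (t := univ) (f := f) (by simp)
    _ ≤ ∑ _b : β, #{i | f i = c} := sum_le_sum fun b _ => hc b
    _ = card β * #{i | f i = c} := by simp

theorem one_le_card_mul_of_sum_eq_one_of_forall_le {α : Type*} [Fintype α] {x : α → ℝ}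
    (hx : ∑ b, x b = 1) {a : α} (ha : ∀ b, x b ≤ x a) : 1 ≤ card α * x a := by
  calc (1 : ℝ) = ∑ b, x b := hx.symm
    _ ≤ ∑ _b : α, x a := sum_le_sum fun b _ => ha b
    _ = card α * x a := by simp

theorem sum_apply_le_card_of_sum_eq_one {ι α : Type*} [Fintype ι] [Fintype α] {v : ι → α → ℝ}
    (hv0 : ∀ i a, 0 ≤ v i a) (hv1 : ∀ i, ∑ a, v i a = 1) (a : α) :
    ∑ i, v i a ≤ card ι := by
  calc ∑ i, v i a ≤ ∑ _i : ι, (1 : ℝ) := sum_le_sum fun i _ =>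
        hv1 i ▸ single_le_sum (fun b _ => hv0 i b) (mem_univ a)
    _ = card ι := by simp

theorem le_of_rank_le {α β γ : Type*} [LinearOrder β] [Preorder γ] {e : α → β}
    (he : Function.Injective e) {v : α → γ} (hcons : ∀ a b, e a < e b → v b ≤ v a) {a b : α}
    (h : e a ≤ e b) : v b ≤ v a := by
  rcases h.lt_or_eq with h | h
  · exact hcons a b h
  · rw [he h]

theorem card_le_card_sq_mul_sum_of_plurality {ι α : Type*} [Fintype ι] [Fintype α]
    [DecidableEq α] {v : ι → α → ℝ} (hv0 : ∀ i a, 0 ≤ v i a) (hv1 : ∀ i, ∑ a, v i a = 1)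
    {top : ι → α} (htop : ∀ i b, v i b ≤ v i (top i)) {r : α}
    (hr : ∀ b, #{i | top i = b} ≤ #{i | top i = r}) :
    (card ι : ℝ) ≤ card α ^ 2 * ∑ i, v i r := by
  have hvoters : (card ι : ℝ) ≤ card α * #{i | top i = r} := by
    exact_mod_cast card_le_card_mul_card_fiber_of_forall_le top r hr
  have hsupport : (#{i | top i = r} : ℝ) ≤ card α * ∑ i, v i r := by
    calc (#{i | top i = r} : ℝ) = ∑ i ∈ {i | top i = r}, 1 := by simp
      _ ≤ ∑ i ∈ {i | top i = r}, card α * v i r := sum_le_sum fun i hi => by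
          rw [(mem_filter.mp hi).2.symm]
          exact one_le_card_mul_of_sum_eq_one_of_forall_le (hv1 i) (htop i)
      _ = card α * ∑ i ∈ {i | top i = r}, v i r := (mul_sum ..).symm
      _ ≤ card α * ∑ i, v i r := mul_le_mul_of_nonneg_left
          (sum_le_sum_of_subset_of_nonneg (subset_univ _) fun i _ _ => hv0 i r) (by positivity)
  calc (card ι : ℝ) ≤ card α * #{i | top i = r} := hvoters
    _ ≤ card α * (card α * ∑ i, v i r) := by gcongr
    _ = card α ^ 2 * ∑ i, v i r := by ring

theorem stmt9
    (k m : ℕ) (hm : 2 ≤ m)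
    (nd : Fin k → ℕ)
    (v : ∀ d : Fin k, Fin (nd d) → Fin m → ℝ)
    (σ : ∀ d : Fin k, Fin (nd d) → (Fin m ≃ Fin m))
    (hv0 : ∀ d i a, 0 ≤ v d i a)
    (hv1 : ∀ d i, ∑ a, v d i a = 1)
    (hcons : ∀ d i a b, σ d i a < σ d i b → v d i b ≤ v d i a)
    (rep : Fin k → Fin m)
    (hrep : ∀ (d : Fin k) (b : Fin m),
      (Finset.univ.filter fun i : Fin (nd d) => (σ d i).symm ⟨0, by omega⟩ = b).card ≤
        (Finset.univ.filter fun i : Fin (nd d) => (σ d i).symm ⟨0, by omega⟩ = rep d).card) :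
    ∀ a : Fin m,
      (1 / ((k : ℝ) * (m : ℝ) ^ 2)) * (∑ d, ∑ i, v d i a) ≤
        ∑ d, (1 / (k : ℝ)) * (∑ d', ∑ i, v d' i (rep d)) := by
  intro a
  have htop : ∀ d i b, v d i b ≤ v d i ((σ d i).symm ⟨0, by omega⟩) := fun d i b =>
    le_of_rank_le (σ d i).injective (hcons d i) (by simp [Fin.le_def])
  have hdistrict : ∀ d, (nd d : ℝ) ≤ m ^ 2 * ∑ i, v d i (rep d) := fun d => by
    simpa using card_le_card_sq_mul_sum_of_plurality (hv0 d) (hv1 d) (htop d) (hrep d)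
  have hwelfare : ∑ d, ∑ i, v d i a ≤ m ^ 2 * ∑ d, ∑ d', ∑ i, v d' i (rep d) := by
    calc ∑ d, ∑ i, v d i a ≤ ∑ d, (nd d : ℝ) := sum_le_sum fun d _ => by
          simpa using sum_apply_le_card_of_sum_eq_one (hv0 d) (hv1 d) a
      _ ≤ ∑ d, m ^ 2 * ∑ i, v d i (rep d) := sum_le_sum fun d _ => hdistrict d
      _ ≤ ∑ d, m ^ 2 * ∑ d', ∑ i, v d' i (rep d) := sum_le_sum fun d _ => by
          gcongr
          exact single_le_sum (f := fun d' => ∑ i, v d' i (rep d))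
            (fun d' _ => sum_nonneg fun i _ => hv0 d' i (rep d)) (mem_univ d)
      _ = m ^ 2 * ∑ d, ∑ d', ∑ i, v d' i (rep d) := (mul_sum ..).symm
  calc 1 / ((k : ℝ) * m ^ 2) * ∑ d, ∑ i, v d i a
      ≤ 1 / ((k : ℝ) * m ^ 2) * (m ^ 2 * ∑ d, ∑ d', ∑ i, v d' i (rep d)) := by gcongr
    _ = ∑ d, 1 / (k : ℝ) * ∑ d', ∑ i, v d' i (rep d) := by
      rw [← mul_sum]; field_simp
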